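/- arXiv:1802.09657 — 4 statements merged into one kernel-verified Lean document; each statement's English description precedes it below -/
import Mathlib

section
/- Let n be a positive natural number, t0 a real number, and let e : ℝ → ℝⁿ (Euclidean norm) and δ : ℝ → ℝⁿ be continuous on [t0, ∞) with e(t0) = 0. Suppose there exist constants c1, c2, c3, c4 > 0 and a function v : ℝ → ℝ, differentiable on [t0, ∞), such that for all t ≥ t0: c1·‖e(t)‖² ≤ v(t) ≤ c2·‖e(t)‖² and v'(t) ≤ −c3·‖e(t)‖² + c4·‖e(t)‖·‖δ(t)‖. Then for all t ≥ t0, ‖e(t)‖ ≤ (c4/(2·c1)) · ∫_{t0}^t exp(−(t−s)·c3/(2·c2)) · ‖δ(s)‖ ds. -/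
open Set MeasureTheory Real

/-! Dividing the dissipation inequality by `2 √v` shows that `w = √v` obeys the linear differential
inequality `w' ≤ -(c3 / (2 c2)) w + (c4 / (2 √c1)) ‖δ‖`, because `c1 ‖e‖² ≤ v ≤ c2 ‖e‖²`.
Variation of constants then bounds `w` by the convolution of `‖δ‖` with the decaying exponential,
starting from `w t0 = 0`, and `‖e‖ ≤ w / √c1`. Since `√` is not differentiable at `0`, the argument
is run for `√(v + ε) - √ε` and `ε` is sent to `0` at the end. -/

theorem le_exp_mul_add_integral_of_hasDerivAt_le {w w' f : ℝ → ℝ} {α a b : ℝ} (hab : a ≤ b)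
    (hw : ContinuousOn w (Icc a b)) (hw' : ∀ s ∈ Ioo a b, HasDerivAt w (w' s) s)
    (hf : IntegrableOn f (Icc a b)) (hle : ∀ s ∈ Ioo a b, w' s ≤ -α * w s + f s) :
    w b ≤ exp (-α * (b - a)) * w a + ∫ s in a..b, exp (-α * (b - s)) * f s := by
  have hexp : Continuous fun s => exp (α * s) := by fun_prop
  have hint := intervalIntegral.sub_le_integral_of_hasDeriv_right_of_le
    (g := fun s => exp (α * s) * w s) (φ := fun s => exp (α * s) * f s) hab (hexp.continuousOn.mul hw)
    (fun s hs => ((((hasDerivAt_id s).const_mul α).exp).mul (hw' s hs)).hasDerivWithinAt)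
    (hf.continuousOn_mul hexp.continuousOn isCompact_Icc) fun s hs => by
      have := mul_le_mul_of_nonneg_left (hle s hs) (exp_pos (α * s)).le
      simp only [id, mul_one]
      linarith
  have key : ∫ s in a..b, exp (-α * (b - s)) * f s
      = exp (-α * b) * ∫ s in a..b, exp (α * s) * f s := by
    rw [← intervalIntegral.integral_const_mul]
    congr 1 with s
    rw [← mul_assoc, ← exp_add]
    ring_nf
  rw [key]
  have hb : w b = exp (-α * b) * (exp (α * b) * w b) := by
    rw [← mul_assoc, ← exp_add]; simp
  have ha : exp (-α * (b - a)) * w a = exp (-α * b) * (exp (α * a) * w a) := by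
    rw [← mul_assoc, ← exp_add]; ring_nf
  rw [hb, ha, ← mul_add]
  exact mul_le_mul_of_nonneg_left (by linarith) (exp_pos _).le

theorem mul_le_sqrt_of_mul_sq_le {c x y : ℝ} (hc : 0 ≤ c) (hx : 0 ≤ x) (h : c * x ^ 2 ≤ y) :
    √c * x ≤ √y := by
  rw [← sqrt_sq (by positivity : 0 ≤ √c * x), mul_pow, sq_sqrt hc]
  exact sqrt_le_sqrt h

theorem sqrt_lyapunov_deriv_le {c1 c2 c3 c4 x d v v' ε : ℝ} (hc1 : 0 < c1) (hc2 : 0 < c2)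
    (hc3 : 0 ≤ c3) (hc4 : 0 ≤ c4) (hx : 0 ≤ x) (hd : 0 ≤ d) (hε : 0 < ε)
    (hlow : c1 * x ^ 2 ≤ v) (hupp : v ≤ c2 * x ^ 2) (hdiss : v' ≤ -c3 * x ^ 2 + c4 * x * d) :
    v' / (2 * √(v + ε)) ≤ -(c3 / (2 * c2)) * (√(v + ε) - √ε) + c4 / (2 * √c1) * d := by
  have hv : 0 < v + ε := by nlinarith
  set w := √(v + ε)
  have hw2 : w ^ 2 = v + ε := sq_sqrt hv.le
  have hεw : √ε ≤ w := sqrt_le_sqrt (by nlinarith)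
  have hxw : √c1 * x ≤ w := mul_le_sqrt_of_mul_sq_le hc1.le hx (by linarith)
  have hsc1 : 0 < √c1 := sqrt_pos.2 hc1
  have hquad : c3 * v ≤ c2 * (c3 * x ^ 2) := by nlinarith
  have hcross : √c1 * (c4 * x * d) ≤ c4 * w * d := by
    have := mul_le_mul_of_nonneg_left hxw (mul_nonneg hc4 hd); nlinarith
  have hreg : ε ≤ √ε * w := by
    nlinarith [sq_sqrt hε.le, sqrt_nonneg ε]
  rw [div_le_iff₀ (by positivity)]
  have expand : (-(c3 / (2 * c2)) * (w - √ε) + c4 / (2 * √c1) * d) * (2 * w)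
      = (c3 * (√ε * w - w ^ 2)) / c2 + c4 * w * d / √c1 := by
    field_simp; ring
  rw [expand, hw2]
  have h1 : -c3 * x ^ 2 ≤ c3 * (√ε * w - (v + ε)) / c2 := by
    rw [le_div_iff₀ hc2]; nlinarith [mul_le_mul_of_nonneg_left hreg hc3]
  have h2 : c4 * x * d ≤ c4 * w * d / √c1 := by
    rw [le_div_iff₀ hsc1]; linarith
  linarith

theorem sqrt_add_sub_sqrt_le_integral {E F : Type*} [NormedAddCommGroup E]
    [NormedAddCommGroup F] {t0 t ε c1 c2 c3 c4 : ℝ} {e : ℝ → E} {δ : ℝ → F} {v v' : ℝ → ℝ}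
    (ht : t0 ≤ t) (hε : 0 < ε) (hδ : ContinuousOn δ (Ici t0)) (he0 : e t0 = 0)
    (hc1 : 0 < c1) (hc2 : 0 < c2) (hc3 : 0 ≤ c3) (hc4 : 0 ≤ c4)
    (hv : ∀ t ≥ t0, HasDerivAt v (v' t) t)
    (hlow : ∀ t ≥ t0, c1 * ‖e t‖ ^ 2 ≤ v t)
    (hupp : ∀ t ≥ t0, v t ≤ c2 * ‖e t‖ ^ 2)
    (hdiss : ∀ t ≥ t0, v' t ≤ -c3 * ‖e t‖ ^ 2 + c4 * ‖e t‖ * ‖δ t‖) :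
    √(v t + ε) - √ε ≤
      c4 / (2 * √c1) * ∫ s in t0..t, exp (-(c3 / (2 * c2)) * (t - s)) * ‖δ s‖ := by
  have hvε : ∀ s ≥ t0, v s + ε ≠ 0 := fun s hs => by
    nlinarith [hlow s hs, sq_nonneg ‖e s‖]
  have hcomp := le_exp_mul_add_integral_of_hasDerivAt_le (w := fun s => √(v s + ε) - √ε)
    (f := fun s => c4 / (2 * √c1) * ‖δ s‖) ht
    (fun s hs =>
      (((hv s hs.1).continuousAt.add_const ε).sqrt.sub continuousAt_const).continuousWithinAt)
    (fun s (hs : s ∈ Ioo t0 t) => (((hv s hs.1.le).add_const ε).sqrt (hvε s hs.1.le)).sub_const _)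
    ((continuousOn_const.mul (hδ.mono Icc_subset_Ici_self).norm).integrableOn_compact
      isCompact_Icc)
    (fun s hs => sqrt_lyapunov_deriv_le hc1 hc2 hc3 hc4 (norm_nonneg _) (norm_nonneg _) hε
      (hlow s hs.1.le) (hupp s hs.1.le) (hdiss s hs.1.le))
  have hstart : √(v t0 + ε) - √ε ≤ 0 := by
    have := hupp t0 le_rfl
    rw [he0, norm_zero] at this
    exact sub_nonpos.2 (sqrt_le_sqrt (by linarith))
  simp only [← mul_left_comm (c4 / (2 * √c1)), intervalIntegral.integral_const_mul] at hcomp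
  have := mul_nonpos_of_nonneg_of_nonpos (exp_pos (-(c3 / (2 * c2)) * (t - t0))).le hstart
  linarith

theorem stmt_0_general (n : ℕ) (t0 : ℝ)
    (e δ : ℝ → EuclideanSpace ℝ (Fin n))
    (hδ : ContinuousOn δ (Set.Ici t0))
    (he0 : e t0 = 0)
    (c1 c2 c3 c4 : ℝ) (hc1 : 0 < c1) (hc2 : 0 < c2) (hc3 : 0 < c3) (hc4 : 0 < c4)
    (v v' : ℝ → ℝ)
    (hv : ∀ t ≥ t0, HasDerivAt v (v' t) t)
    (hlow : ∀ t ≥ t0, c1 * ‖e t‖ ^ 2 ≤ v t)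
    (hupp : ∀ t ≥ t0, v t ≤ c2 * ‖e t‖ ^ 2)
    (hdiss : ∀ t ≥ t0, v' t ≤ -c3 * ‖e t‖ ^ 2 + c4 * ‖e t‖ * ‖δ t‖) :
    ∀ t ≥ t0,
      ‖e t‖ ≤ (c4 / (2 * c1)) *
        ∫ s in t0..t, Real.exp (-(t - s) * c3 / (2 * c2)) * ‖δ s‖ := by
  intro t ht
  set I := ∫ s in t0..t, Real.exp (-(t - s) * c3 / (2 * c2)) * ‖δ s‖
  have hI : ∫ s in t0..t, exp (-(c3 / (2 * c2)) * (t - s)) * ‖δ s‖ = I := by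
    congr 1 with s; ring_nf
  have hsc1 : 0 < √c1 := sqrt_pos.2 hc1
  refine le_of_forall_pos_le_add fun η hη => le_of_mul_le_mul_left ?_ hsc1
  have hbound := sqrt_add_sub_sqrt_le_integral ht (by positivity : 0 < c1 * η ^ 2) hδ he0 hc1 hc2
    hc3.le hc4.le hv hlow hupp hdiss
  rw [hI, sqrt_mul hc1.le, sqrt_sq hη.le] at hbound
  have hnorm : √c1 * ‖e t‖ ≤ √(v t + c1 * η ^ 2) :=
    mul_le_sqrt_of_mul_sq_le hc1.le (norm_nonneg _) (by nlinarith [hlow t ht])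
  have hcoef : c4 / (2 * √c1) = √c1 * (c4 / (2 * c1)) := by
    field_simp; rw [sq_sqrt hc1.le]
  rw [hcoef] at hbound
  linarith

/-- Proposition 2 of the paper: BIBO-type bound for the error of an
event-triggered system, with the converse-Lyapunov hypotheses made explicit. -/
theorem stmt_0 (n : ℕ) (hn : 0 < n) (t0 : ℝ)
    (e δ : ℝ → EuclideanSpace ℝ (Fin n))
    (he : ContinuousOn e (Set.Ici t0)) (hδ : ContinuousOn δ (Set.Ici t0))
    (he0 : e t0 = 0)
    (c1 c2 c3 c4 : ℝ) (hc1 : 0 < c1) (hc2 : 0 < c2) (hc3 : 0 < c3) (hc4 : 0 < c4)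
    (v v' : ℝ → ℝ)
    (hv : ∀ t ≥ t0, HasDerivAt v (v' t) t)
    (hlow : ∀ t ≥ t0, c1 * ‖e t‖ ^ 2 ≤ v t)
    (hupp : ∀ t ≥ t0, v t ≤ c2 * ‖e t‖ ^ 2)
    (hdiss : ∀ t ≥ t0, v' t ≤ -c3 * ‖e t‖ ^ 2 + c4 * ‖e t‖ * ‖δ t‖) :
    ∀ t ≥ t0,
      ‖e t‖ ≤ (c4 / (2 * c1)) *
        ∫ s in t0..t, Real.exp (-(t - s) * c3 / (2 * c2)) * ‖δ s‖ :=
  stmt_0_general n t0 e δ hδ he0 c1 c2 c3 c4 hc1 hc2 hc3 hc4 v v' hv hlow hupp hdiss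
end

section
/- Let m, n be positive natural numbers. For each i = 1, …, m let f_i : ℝⁿ → ℝⁿ be Lipschitz with constant L_f^i ≥ 0 and let γ_i : ℝⁿ → ℝ be Lipschitz with constant L_γ^i ≥ 0. Then for all a, b ∈ ℝⁿ, ‖ Σ_{i=1}^m f_i(b) · (γ_i(a) − γ_i(b)) ‖ ≤ α·‖a − b‖² + β·‖a − b‖, where α = Σ_{i=1}^m L_γ^i · L_f^i and β = Σ_{i=1}^m L_γ^i · ‖f_i(a)‖, and ‖·‖ is the Euclidean norm on ℝⁿ. -/
/-- Lemma 1 of the paper: the event-triggering mismatch term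
`Σ_i f_i(b)·(γ_i(a) − γ_i(b))` is bounded by a quadratic form in `‖a − b‖`. -/
theorem stmt_2 (m n : ℕ) (hm : 0 < m) (hn : 0 < n)
    (f : Fin m → EuclideanSpace ℝ (Fin n) → EuclideanSpace ℝ (Fin n))
    (γ : Fin m → EuclideanSpace ℝ (Fin n) → ℝ)
    (Lf Lγ : Fin m → ℝ)
    (hLf : ∀ i, 0 ≤ Lf i) (hLγ : ∀ i, 0 ≤ Lγ i)
    (hf : ∀ i, ∀ x y, ‖f i x - f i y‖ ≤ Lf i * ‖x - y‖)
    (hγ : ∀ i, ∀ x y, |γ i x - γ i y| ≤ Lγ i * ‖x - y‖) :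
    ∀ a b : EuclideanSpace ℝ (Fin n),
      ‖∑ i, (γ i a - γ i b) • f i b‖ ≤
        (∑ i, Lγ i * Lf i) * ‖a - b‖ ^ 2 + (∑ i, Lγ i * ‖f i a‖) * ‖a - b‖ := by
  intro a b
  calc ‖∑ i, (γ i a - γ i b) • f i b‖
      ≤ ∑ i, ‖(γ i a - γ i b) • f i b‖ := norm_sum_le _ _
    _ ≤ ∑ i, (Lγ i * Lf i * ‖a - b‖ ^ 2 + Lγ i * ‖f i a‖ * ‖a - b‖) := by
        apply Finset.sum_le_sum
        intro i _
        rw [norm_smul, Real.norm_eq_abs]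
        have h1 : ‖f i b‖ ≤ ‖f i a‖ + Lf i * ‖a - b‖ := by
          calc ‖f i b‖ ≤ ‖f i a‖ + ‖f i b - f i a‖ := by
                have := norm_sub_norm_le (f i b) (f i a); linarith
            _ ≤ ‖f i a‖ + Lf i * ‖b - a‖ := by linarith [hf i b a]
            _ = ‖f i a‖ + Lf i * ‖a - b‖ := by rw [norm_sub_rev]
        have h2 := hγ i a b
        have hab : (0:ℝ) ≤ ‖a - b‖ := norm_nonneg _
        have habs : (0:ℝ) ≤ |γ i a - γ i b| := abs_nonneg _
        nlinarith [norm_nonneg (f i a), mul_le_mul h2 h1 (norm_nonneg _)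
          (mul_nonneg (hLγ i) hab)]
    _ = (∑ i, Lγ i * Lf i) * ‖a - b‖ ^ 2 + (∑ i, Lγ i * ‖f i a‖) * ‖a - b‖ := by
        rw [Finset.sum_add_distrib, ← Finset.sum_mul, ← Finset.sum_mul]
end

section
/- Let α, β, ε₁ be real numbers with α > 0, β > 0, ε₁ > 0, and let r ≥ 0 be a real number. If r ≤ β·ε₁/(β² + 4·α·ε₁), then α·r² + β·r ≤ ε₁. -/
/-- Algebraic core of the paper's Proposition 4 (sufficiency). -/
theorem stmt_4 (α β ε₁ r : ℝ) (hα : 0 < α) (hβ : 0 < β) (hε : 0 < ε₁)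
    (hr : 0 ≤ r) (h : r ≤ β * ε₁ / (β ^ 2 + 4 * α * ε₁)) :
    α * r ^ 2 + β * r ≤ ε₁ := by
  have hD : 0 < β ^ 2 + 4 * α * ε₁ := by positivity
  set D := β ^ 2 + 4 * α * ε₁ with hDdef
  rw [le_div_iff₀ hD] at h
  -- h : r * D ≤ β * ε₁
  have h3 : (r * D) * (r * D) ≤ (β * ε₁) * (β * ε₁) :=
    mul_le_mul h h (by positivity) (by positivity)
  -- It suffices to show (α r² + β r) D² ≤ ε₁ D²
  have key : (α * r ^ 2 + β * r) * D ^ 2 ≤ ε₁ * D ^ 2 := by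
    have hA : α * r ^ 2 * D ^ 2 ≤ α * (β * ε₁) ^ 2 := by
      have := mul_le_mul_of_nonneg_left h3 hα.le
      nlinarith [this]
    have hB : β * r * D ^ 2 ≤ β ^ 2 * ε₁ * D := by
      have := mul_le_mul_of_nonneg_left h (mul_pos hβ hD).le
      nlinarith [this]
    have hC : α * (β * ε₁) ^ 2 + β ^ 2 * ε₁ * D ≤ ε₁ * D ^ 2 := by
      rw [hDdef]
      nlinarith [mul_pos hα hε, sq_nonneg β, sq_nonneg (α * ε₁), mul_pos (mul_pos hα hα) (mul_pos hε hε)]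
    nlinarith [hA, hB, hC]
  exact le_of_mul_le_mul_right key (by positivity)
end

section
/- Let l > 0 and p_m > 0 be real numbers and let w : ℝ → ℝ be differentiable on [0, ∞) with w(0) = 0 and w'(r) ≥ 1/(r·l + p_m·exp(l·w(r))) for all r ≥ 0. Then for all r ≥ 0, p_m · w(r) · exp(l·w(r)) ≥ r. -/
open Set

/-- Comparison-lemma step of the delay analysis: the solution of the
triggering-time ODE dominates `(1/l)·W(l·r/p_m)`, i.e.
`p_m·w(r)·e^{l·w(r)} ≥ r`. -/
theorem stmt_12 (l pm : ℝ) (hl : 0 < l) (hpm : 0 < pm)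
    (w w' : ℝ → ℝ)
    (hw : ∀ r ≥ (0:ℝ), HasDerivAt w (w' r) r)
    (hw0 : w 0 = 0)
    (hw' : ∀ r ≥ (0:ℝ), w' r ≥ 1 / (r * l + pm * Real.exp (l * w r))) :
    ∀ r ≥ (0:ℝ), pm * w r * Real.exp (l * w r) ≥ r := by
  have hd : ∀ r ≥ (0:ℝ), 0 < r * l + pm * Real.exp (l * w r) := by
    intro r hr
    have := Real.exp_pos (l * w r)
    nlinarith
  have hw'pos : ∀ r ≥ (0:ℝ), 0 < w' r := by
    intro r hr
    have h1 : 0 < 1 / (r * l + pm * Real.exp (l * w r)) := by positivity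
    linarith [hw' r hr]
  -- w is monotone on [0, ∞), hence nonnegative
  have hwmono : MonotoneOn w (Ici (0:ℝ)) := by
    apply monotoneOn_of_deriv_nonneg (convex_Ici 0)
    · exact fun x hx => (hw x hx).continuousAt.continuousWithinAt
    · rw [interior_Ici]
      exact fun x hx => (hw x (le_of_lt hx)).differentiableAt.differentiableWithinAt
    · rw [interior_Ici]
      intro x hx
      rw [(hw x hx.le).deriv]
      exact (hw'pos x hx.le).le
  have hwnn : ∀ r ≥ (0:ℝ), 0 ≤ w r := by
    intro r hr
    have := hwmono (self_mem_Ici) hr hr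
    rwa [hw0] at this
  set G : ℝ → ℝ := fun r => pm * w r * Real.exp (l * w r) - r with hGdef
  set G' : ℝ → ℝ := fun r => pm * w' r * Real.exp (l * w r)
      + pm * w r * (Real.exp (l * w r) * (l * w' r)) - 1 with hG'def
  have hGderiv : ∀ r ≥ (0:ℝ), HasDerivAt G (G' r) r := by
    intro r hr
    have h1 : HasDerivAt (fun r => pm * w r) (pm * w' r) r := (hw r hr).const_mul pm
    have h2 : HasDerivAt (fun r => Real.exp (l * w r)) (Real.exp (l * w r) * (l * w' r)) r :=
      ((hw r hr).const_mul l).exp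
    exact (h1.mul h2).sub (hasDerivAt_id r)
  -- key differential inequality: G' r * d ≥ l * G r
  have hkey : ∀ r ≥ (0:ℝ), l * G r ≤ G' r * (r * l + pm * Real.exp (l * w r)) := by
    intro r hr
    have hdp := hd r hr
    have hE := Real.exp_pos (l * w r)
    have h1 : 1 ≤ w' r * (r * l + pm * Real.exp (l * w r)) := by
      have := hw' r hr
      rw [ge_iff_le, div_le_iff₀ hdp] at this
      exact this
    have hwr := hwnn r hr
    simp only [hGdef, hG'def]
    nlinarith [mul_le_mul_of_nonneg_left h1 (mul_pos hpm hE).le,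
      mul_le_mul_of_nonneg_left h1
        (mul_nonneg (mul_nonneg (mul_nonneg hpm.le hwr) hE.le) hl.le)]
  intro r0 hr0
  by_contra hcon
  push_neg at hcon
  have hGr0 : G r0 < 0 := by simp only [hGdef]; linarith
  set S : Set ℝ := {x | x ∈ Icc (0:ℝ) r0 ∧ 0 ≤ G x} with hSdef
  have hS0 : (0:ℝ) ∈ S := by
    refine ⟨⟨le_refl 0, hr0⟩, ?_⟩
    simp [hGdef, hw0]
  have hSne : S.Nonempty := ⟨0, hS0⟩
  have hSbdd : BddAbove S := ⟨r0, fun x hx => hx.1.2⟩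
  set m := sSup S with hm
  have hm0 : 0 ≤ m := le_csSup hSbdd hS0
  have hmr0 : m ≤ r0 := csSup_le hSne (fun x hx => hx.1.2)
  have hGm : 0 ≤ G m := by
    have hmcl : m ∈ closure S := csSup_mem_closure hSne hSbdd
    have hc : ContinuousWithinAt G S m := (hGderiv m hm0).continuousAt.continuousWithinAt
    have h1 : G m ∈ closure (G '' S) := hc.mem_closure_image hmcl
    have hsub : G '' S ⊆ Ici 0 := by rintro _ ⟨x, hx, rfl⟩; exact hx.2
    have h2 : G m ∈ closure (Ici (0:ℝ)) := closure_mono hsub h1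
    rwa [closure_Ici] at h2
  have hmlt : m < r0 := lt_of_le_of_ne hmr0 (fun h => by rw [h] at hGm; linarith)
  have hGneg : ∀ x ∈ Ioc m r0, G x < 0 := by
    intro x hx
    by_contra h
    push_neg at h
    have hxS : x ∈ S := ⟨⟨le_trans hm0 hx.1.le, hx.2⟩, h⟩
    exact absurd (le_csSup hSbdd hxS) (not_le.mpr hx.1)
  -- auxiliary exponentially-damped function
  have hHd : ∀ x ≥ (0:ℝ), HasDerivAt (fun y => G y * Real.exp (-(l/pm) * y))
      (G' x * Real.exp (-(l/pm) * x) + G x * (Real.exp (-(l/pm) * x) * (-(l/pm)))) x := by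
    intro x hx
    have h1 : HasDerivAt (fun y : ℝ => -(l/pm) * y) (-(l/pm)) x := by
      simpa using (hasDerivAt_id x).const_mul (-(l/pm))
    exact (hGderiv x hx).mul h1.exp
  have hmono : MonotoneOn (fun y => G y * Real.exp (-(l/pm) * y)) (Icc m r0) := by
    apply monotoneOn_of_deriv_nonneg (convex_Icc m r0)
    · exact fun x hx => (hHd x (le_trans hm0 hx.1)).continuousAt.continuousWithinAt
    · rw [interior_Icc]
      exact fun x hx => (hHd x (le_trans hm0 hx.1.le)).differentiableAt.differentiableWithinAt
    · rw [interior_Icc]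
      intro x hx
      have hx0 : 0 ≤ x := le_trans hm0 hx.1.le
      rw [(hHd x hx0).deriv]
      have hGx : G x < 0 := hGneg x ⟨hx.1, hx.2.le⟩
      have hk := hkey x hx0
      have hE1 : 1 ≤ Real.exp (l * w x) := by
        rw [← Real.exp_zero]
        exact Real.exp_le_exp.mpr (mul_nonneg hl.le (hwnn x hx0))
      have hdge : pm ≤ x * l + pm * Real.exp (l * w x) := by nlinarith
      have hepos : 0 < Real.exp (-(l/pm) * x) := Real.exp_pos _
      have h2 : (l/pm) * G x ≤ G' x := by
        rcases le_or_gt 0 (G' x) with h | h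
        · exact le_trans (mul_nonpos_of_nonneg_of_nonpos (div_pos hl hpm).le hGx.le) h
        · have h3 : G' x * (x * l + pm * Real.exp (l * w x)) ≤ G' x * pm :=
            mul_le_mul_of_nonpos_left hdge h.le
          rw [div_mul_eq_mul_div, div_le_iff₀ hpm]
          linarith
      nlinarith [mul_nonneg hepos.le (sub_nonneg.mpr h2)]
  have hfin := hmono ⟨le_refl m, hmlt.le⟩ ⟨hmlt.le, le_refl r0⟩ hmlt.le
  simp only at hfin
  have h1 : 0 ≤ G m * Real.exp (-(l/pm) * m) := mul_nonneg hGm (Real.exp_pos _).le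
  nlinarith [Real.exp_pos (-(l/pm) * r0), mul_neg_of_neg_of_pos hGr0 (Real.exp_pos (-(l/pm) * r0))]
end
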